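/- Let K be a number field and F = (F₀,F₁,F₂) a triple of homogeneous polynomials of common degree λ ≥ 2 in K[x₀,x₁,x₂]. Let a ∈ K³ be such that F^n(a) ≠ 0 for every n ≥ 0. Then the limit ĥ(a) := lim_{n→∞} λ^{-n}·h(F^n(a)) exists, is finite and nonnegative, and satisfies the functional equation ĥ(F(a)) = λ·ĥ(a). -/

import Mathlib

/-!
At each place `‖F(b)‖_v ≤ C_v ‖b‖_v^λ`, where `C_v` depends only on the coefficients of `F` and
equals `1` at every ultrametric place where all coefficients have absolute value at most `1`,
hence at all but finitely many places. Summing logarithms gives `h(F b) ≤ λ h(b) + C`, while the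
product formula gives `h ≥ 0`. Tate's telescoping argument then makes `λ⁻ⁿ h(Fⁿ a)` converge, and
`ĥ(F a) = λ ĥ(a)` is a shift of the index.
-/

open MvPolynomial Filter

/-- The polynomial map `K³ → K³` induced by a triple of polynomials. -/
noncomputable def polyMap {K : Type*} [Field K] (P : Fin 3 → MvPolynomial (Fin 3) K) :
    (Fin 3 → K) → (Fin 3 → K) :=
  fun a i => eval a (P i)

/-- `‖b‖_v = max (|b₀|_v, |b₁|_v, |b₂|_v)`. -/
noncomputable def vNorm {K : Type*} [Field K] (v : AbsoluteValue K ℝ) (b : Fin 3 → K) : ℝ :=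
  max (v (b 0)) (max (v (b 1)) (v (b 2)))

open Topology Function

section LocalNorm

variable {K : Type*} [Field K] (v : AbsoluteValue K ℝ)

lemma vNorm_eq_iSup (b : Fin 3 → K) : vNorm v b = ⨆ i, v (b i) := by
  rw [← Finset.sup'_univ_eq_ciSup]
  simp [vNorm, Fin.univ_succ]

lemma apply_le_vNorm (b : Fin 3 → K) (i : Fin 3) : v (b i) ≤ vNorm v b :=
  vNorm_eq_iSup v b ▸ Finite.le_ciSup (fun i => v (b i)) i

lemma vNorm_pos {b : Fin 3 → K} (hb : b ≠ 0) : 0 < vNorm v b := by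
  obtain ⟨i, hi⟩ := Function.ne_iff.mp hb
  exact (v.pos hi).trans_le (apply_le_vNorm v b i)

lemma vNorm_eq_one {b : Fin 3 → K} (hb : b ≠ 0) (h : ∀ i, b i ≠ 0 → v (b i) = 1) :
    vNorm v b = 1 := by
  obtain ⟨i, hi⟩ := Function.ne_iff.mp hb
  refine le_antisymm ?_ ((h i hi).ge.trans (apply_le_vNorm v b i))
  rw [vNorm_eq_iSup]
  refine ciSup_le fun j => ?_
  by_cases hj : b j = 0
  · simp [hj]
  · exact (h j hj).le

end LocalNorm

section LocalBound

variable {K : Type*} [Field K]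

open Classical in
noncomputable def localBound (v : AbsoluteValue K ℝ) (P : Fin 3 → MvPolynomial (Fin 3) K) : ℝ :=
  if IsNonarchimedean v then max 1 (⨆ j, ⨆ d : (P j).support, v (coeff d (P j)))
  else max 1 (⨆ j, (AddMonoidAlgebra.coeff (P j)).sum fun _ c => v c)

lemma one_le_localBound (v : AbsoluteValue K ℝ) (P : Fin 3 → MvPolynomial (Fin 3) K) :
    1 ≤ localBound v P := by
  unfold localBound
  split_ifs <;> exact le_max_left _ _

lemma vNorm_polyMap_le (v : AbsoluteValue K ℝ) {P : Fin 3 → MvPolynomial (Fin 3) K} {n : ℕ}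
    (hP : ∀ j, (P j).IsHomogeneous n) (b : Fin 3 → K) :
    vNorm v (polyMap P b) ≤ localBound v P * vNorm v b ^ n := by
  have hb : 0 ≤ vNorm v b ^ n := pow_nonneg ((v.nonneg _).trans (apply_le_vNorm v b 0)) n
  rw [vNorm_eq_iSup v (polyMap P b)]
  refine ciSup_le fun j => ?_
  rw [vNorm_eq_iSup] at hb ⊢
  unfold localBound
  split_ifs with hv
  · refine (hv.eval_mvPolynomial_le (hP j) b).trans (mul_le_mul_of_nonneg_right ?_ hb)
    exact le_max_of_le_right (Finite.le_ciSup_of_le j le_rfl)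
  · refine (v.eval_mvPolynomial_le (hP j) b).trans (mul_le_mul_of_nonneg_right ?_ hb)
    exact le_max_of_le_right (Finite.le_ciSup_of_le j le_rfl)

lemma localBound_eq_one {v : AbsoluteValue K ℝ} (hv : IsNonarchimedean v)
    {P : Fin 3 → MvPolynomial (Fin 3) K} (h : ∀ j, ∀ d ∈ (P j).support, v (coeff d (P j)) ≤ 1) :
    localBound v P = 1 := by
  rw [localBound, if_pos hv]
  exact max_eq_left (Real.iSup_le (fun j => Real.iSup_le (fun d => h j d d.2) zero_le_one)
    zero_le_one)

lemma hasFiniteSupport_log_localBound {ι : Type*} {M : ι → AbsoluteValue K ℝ}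
    (hfin : ∀ c : K, c ≠ 0 → (support fun w => Real.log (M w c)).Finite)
    (harch : {w | ¬ IsNonarchimedean (M w)}.Finite) (P : Fin 3 → MvPolynomial (Fin 3) K) :
    HasFiniteSupport fun w => Real.log (localBound (M w) P) := by
  refine (harch.union (Set.finite_iUnion fun j => (P j).support.finite_toSet.biUnion
    fun d hd => hfin _ (mem_support_iff.mp hd))).subset fun w hw => ?_
  contrapose! hw
  simp only [Set.mem_union, Set.mem_ofPred_eq, Set.mem_iUnion, mem_support, Finset.mem_coe,
    not_or, not_not, not_exists] at hw
  obtain ⟨hv, hcoeff⟩ := hw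
  rw [notMem_support, localBound_eq_one hv fun j d hd => (Real.eq_one_of_pos_of_log_eq_zero
    ((M w).pos (mem_support_iff.mp hd)) (hcoeff j d hd)).le, Real.log_one]

end LocalBound

section Height

variable {K : Type*} [Field K] {ι : Type*} {M : ι → AbsoluteValue K ℝ}

noncomputable def weilHeight (M : ι → AbsoluteValue K ℝ) (b : Fin 3 → K) : ℝ :=
  ∑ᶠ w, Real.log (vNorm (M w) b)

lemma hasFiniteSupport_log_vNorm
    (hfin : ∀ c : K, c ≠ 0 → (support fun w => Real.log (M w c)).Finite)
    {b : Fin 3 → K} (hb : b ≠ 0) :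
    HasFiniteSupport fun w => Real.log (vNorm (M w) b) := by
  refine Set.Finite.subset (s := ⋃ i, support fun w => Real.log (M w (b i)))
    (Set.finite_iUnion fun i => ?_) fun w hw => ?_
  · by_cases hi : b i = 0
    · simp [hi]
    · exact hfin _ hi
  · contrapose! hw
    simp only [Set.mem_iUnion, mem_support, not_exists, not_not] at hw
    rw [notMem_support, vNorm_eq_one _ hb fun i hi =>
      Real.eq_one_of_pos_of_log_eq_zero ((M w).pos hi) (hw i), Real.log_one]

lemma weilHeight_nonneg
    (hfin : ∀ c : K, c ≠ 0 → (support fun w => Real.log (M w c)).Finite)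
    (hprod : ∀ c : K, c ≠ 0 → ∑ᶠ w, Real.log (M w c) = 0)
    {b : Fin 3 → K} (hb : b ≠ 0) : 0 ≤ weilHeight M b := by
  obtain ⟨i, hi⟩ := Function.ne_iff.mp hb
  calc 0 = ∑ᶠ w, Real.log (M w (b i)) := (hprod _ hi).symm
    _ ≤ weilHeight M b := finsum_le_finsum' (hfin _ hi) (hasFiniteSupport_log_vNorm hfin hb)
        fun w => Real.log_le_log ((M w).pos hi) (apply_le_vNorm _ b i)

lemma weilHeight_le_of_vNorm_le
    (hfin : ∀ c : K, c ≠ 0 → (support fun w => Real.log (M w c)).Finite)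
    {B : ι → ℝ} (hB : ∀ w, 0 < B w) (hBfin : HasFiniteSupport fun w => Real.log (B w))
    {n : ℕ} {b c : Fin 3 → K} (hb : b ≠ 0) (hc : c ≠ 0)
    (hcb : ∀ w, vNorm (M w) c ≤ B w * vNorm (M w) b ^ n) :
    weilHeight M c ≤ n * weilHeight M b + ∑ᶠ w, Real.log (B w) := by
  have hbfin := hasFiniteSupport_log_vNorm hfin hb
  rw [weilHeight, weilHeight, mul_finsum, ← finsum_add_distrib (by fun_prop) hBfin]
  refine finsum_le_finsum' (hasFiniteSupport_log_vNorm hfin hc) (by fun_prop) fun w => ?_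
  calc Real.log (vNorm (M w) c) ≤ Real.log (B w * vNorm (M w) b ^ n) :=
        Real.log_le_log (vNorm_pos _ hc) (hcb w)
    _ = n * Real.log (vNorm (M w) b) + Real.log (B w) := by
        rw [Real.log_mul (hB w).ne' (pow_pos (vNorm_pos _ hb) n).ne', Real.log_pow, add_comm]

lemma weilHeight_polyMap_le
    (hfin : ∀ c : K, c ≠ 0 → (support fun w => Real.log (M w c)).Finite)
    (harch : {w | ¬ IsNonarchimedean (M w)}.Finite) {P : Fin 3 → MvPolynomial (Fin 3) K} {n : ℕ}
    (hP : ∀ j, (P j).IsHomogeneous n) {b : Fin 3 → K} (hb : b ≠ 0) (hFb : polyMap P b ≠ 0) :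
    weilHeight M (polyMap P b) ≤ n * weilHeight M b + ∑ᶠ w, Real.log (localBound (M w) P) :=
  weilHeight_le_of_vNorm_le hfin (fun _ => one_pos.trans_le (one_le_localBound _ _))
    (hasFiniteSupport_log_localBound hfin harch P) hb hFb fun _ => vNorm_polyMap_le _ hP b

end Height

lemma exists_tendsto_inv_pow_mul_of_le_mul_add {c C : ℝ} (hc : 1 < c) {h : ℕ → ℝ}
    (h0 : ∀ n, 0 ≤ h n) (hstep : ∀ n, h (n + 1) ≤ c * h n + C) :
    ∃ L, Tendsto (fun n => c⁻¹ ^ n * h n) atTop (𝓝 L) := by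
  -- Tate's telescoping: `h (n + 1) + D ≤ c (h n + D)`, so `c⁻ⁿ (h n + D)` decreases.
  set D := C / (c - 1)
  have hD : C + D = c * D := by
    linarith [div_mul_cancel₀ C (sub_pos.mpr hc).ne']
  have hq : Tendsto (fun n => c⁻¹ ^ n * D) atTop (𝓝 0) := by
    simpa using (tendsto_pow_atTop_nhds_zero_of_lt_one (by positivity)
      (inv_lt_one_of_one_lt₀ hc)).mul_const D
  have hanti : Antitone fun n => c⁻¹ ^ n * (h n + D) := by
    refine antitone_nat_of_succ_le fun n => ?_
    calc c⁻¹ ^ (n + 1) * (h (n + 1) + D) ≤ c⁻¹ ^ (n + 1) * (c * h n + C + D) := by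
          gcongr
          exact hstep n
      _ = c⁻¹ ^ n * (h n + D) := by
          rw [add_assoc, hD, pow_succ]
          field_simp
  have hbdd : BddBelow (Set.range fun n => c⁻¹ ^ n * (h n + D)) := by
    obtain ⟨m, hm⟩ := hq.bddBelow_range
    refine ⟨m, Set.forall_mem_range.mpr fun n => ?_⟩
    have hmn : m ≤ c⁻¹ ^ n * D := hm ⟨n, rfl⟩
    have hn : 0 ≤ c⁻¹ ^ n * h n := mul_nonneg (by positivity) (h0 n)
    linarith [mul_add (c⁻¹ ^ n) (h n) D]
  refine ⟨_, ((tendsto_atTop_ciInf hanti hbdd).sub hq).congr fun n => ?_⟩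
  ring

lemma Filter.Tendsto.inv_pow_mul_succ {c L : ℝ} (hc : c ≠ 0) {h : ℕ → ℝ}
    (hL : Tendsto (fun n => c⁻¹ ^ n * h n) atTop (𝓝 L)) :
    Tendsto (fun n => c⁻¹ ^ n * h (n + 1)) atTop (𝓝 (c * L)) := by
  refine (((tendsto_add_atTop_iff_nat 1).mpr hL).const_mul c).congr fun n => ?_
  rw [pow_succ]
  field_simp

theorem stmt_12_general {K : Type*} [Field K]
    {ι : Type*} (M : ι → AbsoluteValue K ℝ)
    (hfin : ∀ c : K, c ≠ 0 → (Function.support fun w => Real.log (M w c)).Finite)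
    (hprod : ∀ c : K, c ≠ 0 → ∑ᶠ w : ι, Real.log (M w c) = 0)
    (harch : {w : ι | ¬ ∀ x y : K, M w (x + y) ≤ max (M w x) (M w y)}.Finite)
    (lam : ℕ) (hlam : 2 ≤ lam)
    (P : Fin 3 → MvPolynomial (Fin 3) K)
    (hhom : ∀ i, (P i).IsHomogeneous lam)
    (a : Fin 3 → K)
    (ha : ∀ n : ℕ, (polyMap P)^[n] a ≠ 0) :
    ∃ L : ℝ,
      Tendsto (fun n : ℕ => ((lam : ℝ)⁻¹) ^ n *
          ∑ᶠ w : ι, Real.log (vNorm (M w) ((polyMap P)^[n] a))) atTop (nhds L) ∧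
      0 ≤ L ∧
      Tendsto (fun n : ℕ => ((lam : ℝ)⁻¹) ^ n *
          ∑ᶠ w : ι, Real.log (vNorm (M w) ((polyMap P)^[n] (polyMap P a)))) atTop
        (nhds ((lam : ℝ) * L)) := by
  have hnonneg (n : ℕ) : 0 ≤ weilHeight M ((polyMap P)^[n] a) :=
    weilHeight_nonneg hfin hprod (ha n)
  have hstep (n : ℕ) : weilHeight M ((polyMap P)^[n + 1] a) ≤
      lam * weilHeight M ((polyMap P)^[n] a) + ∑ᶠ w, Real.log (localBound (M w) P) := by
    have hFn := ha (n + 1)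
    rw [iterate_succ_apply'] at hFn ⊢
    exact weilHeight_polyMap_le hfin harch hhom (ha n) hFn
  have hlam' : (1 : ℝ) < lam := by exact_mod_cast hlam
  obtain ⟨L, hL⟩ := exists_tendsto_inv_pow_mul_of_le_mul_add hlam' hnonneg hstep
  exact ⟨L, hL, ge_of_tendsto' hL fun n => mul_nonneg (by positivity) (hnonneg n),
    hL.inv_pow_mul_succ (by positivity)⟩

/-- the canonical height `ĥ(a) = lim_n λ^{-n} h(F^n(a))` exists,
is finite and nonnegative, and satisfies `ĥ(F(a)) = λ ĥ(a)`, where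
`h(b) = ∑_{v ∈ M_K} log ‖b‖_v` is the logarithmic Weil height. -/
theorem stmt_12 {K : Type*} [Field K] [NumberField K]
    {ι : Type*} (M : ι → AbsoluteValue K ℝ)
    (hnontriv : ∀ w : ι, ∃ x : K, x ≠ 0 ∧ M w x ≠ 1)
    (hfin : ∀ c : K, c ≠ 0 → (Function.support fun w => Real.log (M w c)).Finite)
    (hprod : ∀ c : K, c ≠ 0 → ∑ᶠ w : ι, Real.log (M w c) = 0)
    (harch : {w : ι | ¬ ∀ x y : K, M w (x + y) ≤ max (M w x) (M w y)}.Finite)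
    (lam : ℕ) (hlam : 2 ≤ lam)
    (P : Fin 3 → MvPolynomial (Fin 3) K)
    (hhom : ∀ i, (P i).IsHomogeneous lam)
    (a : Fin 3 → K)
    (ha : ∀ n : ℕ, (polyMap P)^[n] a ≠ 0) :
    ∃ L : ℝ,
      Tendsto (fun n : ℕ => ((lam : ℝ)⁻¹) ^ n *
          ∑ᶠ w : ι, Real.log (vNorm (M w) ((polyMap P)^[n] a))) atTop (nhds L) ∧
      0 ≤ L ∧
      Tendsto (fun n : ℕ => ((lam : ℝ)⁻¹) ^ n *
          ∑ᶠ w : ι, Real.log (vNorm (M w) ((polyMap P)^[n] (polyMap P a)))) atTop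
        (nhds ((lam : ℝ) * L)) :=
  stmt_12_general M hfin hprod harch lam hlam P hhom a ha
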